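/- arXiv:2512.10649 — 3 statements merged into one kernel-verified Lean document; each statement's English description precedes it below -/
import Mathlib

section
/- The function g(n,m)=J(n)G̃₀(n,m)J(m) with G̃₀(n,m)=(1/(32√2))(2√2|n-m|-(2√2-3)^{|n-m|}) and J(n)=(-1)ⁿ is a fundamental solution of Δ²-16 on ℤ: for every m∈ℤ, ((Δ²-16)_n g(·,m))(n)=δ(n,m). -/
/-!
Conjugating by `J` turns `Δ² - 16` into the stencil
`φ (n+2) + 4 φ (n+1) - 10 φ n + 4 φ (n-1) + φ (n-2)`, whose symbol
`x⁴ + 4x³ - 10x² + 4x + 1 = (x - 1)² (x² + 6x + 1)` has the double root `1` and the root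
`2√2 - 3`. Hence both `d ↦ |d|` and `d ↦ (2√2 - 3)^|d|` are annihilated at every `|d| ≥ 2`;
`G̃₀(·, 0)` is the even combination of them whose defect is `1` at `0` and `0` at `±1`,
and translation invariance moves the pole from `0` to `m`.
-/

/-- The discrete bi-Laplacian `Δ²` on `ℤ` (five-point formula). -/
def biLap (φ : ℤ → ℝ) : ℤ → ℝ :=
  fun n => φ (n + 2) - 4 * φ (n + 1) + 6 * φ n - 4 * φ (n - 1) + φ (n - 2)

/-- The kernel `G̃₀(n,m) = (1/(32√2)) (2√2 |n-m| - (2√2-3)^{|n-m|})`. -/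
noncomputable def Gt₀ (n m : ℤ) : ℝ :=
  (1 / (32 * Real.sqrt 2)) *
    (2 * Real.sqrt 2 * ((|n - m| : ℤ) : ℝ) - (2 * Real.sqrt 2 - 3) ^ (n - m).natAbs)

/-- The conjugated kernel `g(n,m) = (-1)ⁿ G̃₀(n,m) (-1)ᵐ`. -/
noncomputable def gker (n m : ℤ) : ℝ := (-1 : ℝ) ^ n * Gt₀ n m * (-1 : ℝ) ^ m

def conjBiLapSub16 (φ : ℤ → ℝ) (n : ℤ) : ℝ :=
  φ (n + 2) + 4 * φ (n + 1) - 10 * φ n + 4 * φ (n - 1) + φ (n - 2)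

lemma biLap_signFlip_sub (φ : ℤ → ℝ) (n : ℤ) :
    biLap (fun k => (-1 : ℝ) ^ k * φ k) n - 16 * ((-1 : ℝ) ^ n * φ n)
      = (-1 : ℝ) ^ n * conjBiLapSub16 φ n := by
  have hne : (-1 : ℝ) ≠ 0 := by norm_num
  simp only [biLap, conjBiLapSub16, zpow_add₀ hne, zpow_sub₀ hne]
  norm_num
  ring

lemma conjBiLapSub16_const_mul (c : ℝ) (φ : ℤ → ℝ) (n : ℤ) :
    conjBiLapSub16 (fun k => c * φ k) n = c * conjBiLapSub16 φ n := by
  simp only [conjBiLapSub16]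
  ring

lemma conjBiLapSub16_comp_sub (φ : ℤ → ℝ) (m n : ℤ) :
    conjBiLapSub16 (fun k => φ (k - m)) n = conjBiLapSub16 φ (n - m) := by
  simp only [conjBiLapSub16, sub_right_comm _ m, add_sub_right_comm _ _ m]

lemma conjBiLapSub16_comp_neg (φ : ℤ → ℝ) (n : ℤ) :
    conjBiLapSub16 (fun k => φ (-k)) n = conjBiLapSub16 φ (-n) := by
  simp only [conjBiLapSub16, neg_add, sub_eq_add_neg, neg_neg]
  ring

lemma Gt₀_eq_sub (n m : ℤ) : Gt₀ n m = Gt₀ (n - m) 0 := by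
  simp [Gt₀]

lemma Gt₀_neg (d : ℤ) : Gt₀ (-d) 0 = Gt₀ d 0 := by
  simp [Gt₀]

lemma Gt₀_natCast (a : ℕ) :
    Gt₀ a 0 = 1 / (32 * √2) * (2 * √2 * a - (2 * √2 - 3) ^ a) := by
  simp [Gt₀]

lemma two_sqrt_two_sub_three_sq :
    (2 * √2 - 3) ^ 2 = -6 * (2 * √2 - 3) - 1 := by
  linear_combination 4 * Real.sq_sqrt (zero_le_two : (0 : ℝ) ≤ 2)

lemma conjBiLapSub16_Gt₀_zero : conjBiLapSub16 (Gt₀ · 0) 0 = 1 := by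
  have h0 := Gt₀_natCast 0
  have h1 := Gt₀_natCast 1
  have h2 := Gt₀_natCast 2
  simp only [conjBiLapSub16, zero_add, zero_sub, Gt₀_neg]
  push_cast at h0 h1 h2
  rw [h0, h1, h2]
  have hs : √2 ≠ 0 := by positivity
  field_simp
  linear_combination (-2) * two_sqrt_two_sub_three_sq

lemma conjBiLapSub16_Gt₀_one : conjBiLapSub16 (Gt₀ · 0) 1 = 0 := by
  have h0 := Gt₀_natCast 0
  have h1 := Gt₀_natCast 1
  have h2 := Gt₀_natCast 2
  have h3 := Gt₀_natCast 3
  norm_num only [conjBiLapSub16, Gt₀_neg]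
  push_cast at h0 h1 h2 h3
  rw [h0, h1, h2, h3]
  field_simp
  linear_combination (-2) * two_sqrt_two_sub_three_sq +
    (28 - 8 * √2) * Real.sq_sqrt (zero_le_two : (0 : ℝ) ≤ 2)

lemma conjBiLapSub16_Gt₀_natCast_add_two (a : ℕ) :
    conjBiLapSub16 (Gt₀ · 0) (a + 2) = 0 := by
  simp only [conjBiLapSub16]
  rw [show (a : ℤ) + 2 + 2 = (a + 4 : ℕ) by push_cast; ring,
    show (a : ℤ) + 2 + 1 = (a + 3 : ℕ) by push_cast; ring,
    show (a : ℤ) + 2 - 1 = (a + 1 : ℕ) by push_cast; ring,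
    show (a : ℤ) + 2 - 2 = a by ring,
    show (a : ℤ) + 2 = (a + 2 : ℕ) by push_cast; ring]
  simp only [Gt₀_natCast, pow_add]
  push_cast
  -- the linear parts cancel; the powers carry the factor `(r - 1)² (r² + 6r + 1)`, `r = 2√2 - 3`
  linear_combination (-(1 / (32 * √2)) * (2 * √2 - 3) ^ a *
    ((2 * √2 - 3) ^ 2 - 2 * (2 * √2 - 3) + 1)) * two_sqrt_two_sub_three_sq

lemma conjBiLapSub16_Gt₀_neg (d : ℤ) :
    conjBiLapSub16 (Gt₀ · 0) (-d) = conjBiLapSub16 (Gt₀ · 0) d := by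
  rw [← conjBiLapSub16_comp_neg]
  simp only [Gt₀_neg]

lemma conjBiLapSub16_Gt₀_natCast (a : ℕ) :
    conjBiLapSub16 (Gt₀ · 0) a = (if a = 0 then 1 else 0 : ℝ) := by
  match a with
  | 0 => exact conjBiLapSub16_Gt₀_zero
  | 1 => exact conjBiLapSub16_Gt₀_one
  | a + 2 => simpa using conjBiLapSub16_Gt₀_natCast_add_two a

lemma conjBiLapSub16_Gt₀ (d : ℤ) :
    conjBiLapSub16 (Gt₀ · 0) d = if d = 0 then 1 else 0 := by
  rcases Int.natAbs_eq d with hd | hd <;> rw [hd]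
  · simpa using conjBiLapSub16_Gt₀_natCast d.natAbs
  · simpa [conjBiLapSub16_Gt₀_neg] using conjBiLapSub16_Gt₀_natCast d.natAbs

/-- `g = J G̃₀ J` is a fundamental solution of `Δ² - 16` on `ℤ`:
`((Δ² - 16)_n g(·,m))(n) = δ(n,m)` for every `m ∈ ℤ`. -/
theorem stmt_6 (m n : ℤ) :
    biLap (fun k => gker k m) n - 16 * gker n m = if n = m then 1 else 0 := by
  have hg (k : ℤ) : gker k m = (-1 : ℝ) ^ k * ((-1 : ℝ) ^ m * Gt₀ (k - m) 0) := by
    rw [gker, Gt₀_eq_sub]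
    ring
  simp only [hg, biLap_signFlip_sub, conjBiLapSub16_const_mul,
    conjBiLapSub16_comp_sub (Gt₀ · 0), conjBiLapSub16_Gt₀, sub_eq_zero]
  split_ifs with h
  · rw [h, ← mul_assoc, ← mul_zpow]
    norm_num
  · simp
end

section
/- Let G₁ be the operator on ℤ with kernel G₁(n,m)=(a + c(-1)^{n+m})(1/(|n|+|m|) + 1/(|n|-|m|))·1_{||n|-|m||≥2}(n,m), where a=(i-1)/8 and c∈ℝ. Let f_N=χ_{[-N,N]}. Then (G₁ f_N)(N+2) = 2a ∑_{k=2}^{2N+2} 1/k + 2c ∑_{k=2}^{2N+2} (-1)^k/k, and in particular |(G₁ f_N)(N+2)| → ∞ as N → ∞. -/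
/-- The kernel `G₁(n,m) = (a + c(-1)^{n+m})(1/(|n|+|m|) + 1/(|n|-|m|)) · 1_{||n|-|m|| ≥ 2}`,
with `a = (i-1)/8`. -/
noncomputable def G₁ (c : ℝ) (n m : ℤ) : ℂ :=
  ((Complex.I - 1) / 8 + (c : ℂ) * (-1 : ℂ) ^ (n + m)) *
    (((1 / (|(n : ℝ)| + |(m : ℝ)|) + 1 / (|(n : ℝ)| - |(m : ℝ)|)) : ℝ) : ℂ) *
    (if 2 ≤ |(|n| - |m| : ℤ)| then 1 else 0)

/-- The characteristic function of `[-N, N]`. -/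
def fN (N : ℕ) : ℤ → ℂ := fun n => if |n| ≤ (N : ℤ) then 1 else 0

/-
For `n = N + 2` and `|m| ≤ N` one has `||n| - |m|| ≥ 2`, so the indicator is `1` on the whole
support of `f_N`. Since `(-1)^(n+m)` only depends on the parity of `n + m`, which is that of
`|n| ± |m|`, the kernel splits as `g₁(n + m) + g₁(n - m)` with `g₁(k) = (a + c(-1)^k)/k`. As `m`
runs over `[-N, N]`, both `n + m` and `n - m` run over `2, …, 2N + 2`. Because `c` is real, the
imaginary part of the result is `(1/4) ∑_{k=2}^{2N+2} 1/k`, a tail of the divergent harmonic series.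
-/

open Finset Filter

noncomputable def g₁ (c : ℝ) (k : ℤ) : ℂ := ((Complex.I - 1) / 8 + c * (-1 : ℂ) ^ k) / k

lemma neg_one_zpow_eq_of_even_iff {α : Type*} [DivisionRing α] {k l : ℤ} (h : Even k ↔ Even l) :
    (-1 : α) ^ k = (-1) ^ l := by
  simp only [neg_one_zpow_eq_ite, h]

lemma G₁_eq_g₁ (c : ℝ) (n m : ℤ) :
    G₁ c n m = (g₁ c (|n| + |m|) + g₁ c (|n| - |m|)) * if 2 ≤ |(|n| - |m|)| then 1 else 0 := by
  have h₁ : (-1 : ℂ) ^ (n + m) = (-1) ^ (|n| + |m|) :=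
    neg_one_zpow_eq_of_even_iff (by simp [Int.even_add, even_abs])
  have h₂ : (-1 : ℂ) ^ (n + m) = (-1) ^ (|n| - |m|) :=
    neg_one_zpow_eq_of_even_iff (by simp [Int.even_add, Int.even_sub, even_abs])
  have hcast (k : ℤ) : ((|k| : ℤ) : ℂ) = ((|(k : ℝ)| : ℝ) : ℂ) := by
    rw [← Int.cast_abs, Complex.ofReal_intCast]
  rw [G₁, g₁, g₁, ← h₁, ← h₂, Int.cast_add, Int.cast_sub, hcast, hcast]
  push_cast
  ring

lemma tsum_mul_fN (F : ℤ → ℂ) (N : ℕ) : ∑' m, F m * fN N m = ∑ m ∈ Icc (-N : ℤ) N, F m := by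
  have hsupp : ∀ m ∉ Icc (-N : ℤ) N, F m * fN N m = 0 := fun m hm => by
    simp [fN, abs_le, ← mem_Icc, hm]
  rw [tsum_eq_sum hsupp]
  exact sum_congr rfl fun m hm => by simp [fN, abs_le, (mem_Icc.mp hm)]

lemma G₁_natCast_add_two_of_abs_le (c : ℝ) {N : ℕ} {m : ℤ} (hm : |m| ≤ N) :
    G₁ c (N + 2) m = g₁ c (N + 2 + m) + g₁ c (N + 2 - m) := by
  have hn : |(N + 2 : ℤ)| = N + 2 := abs_of_nonneg (by positivity)
  have hgap : 2 ≤ |(N + 2 - |m| : ℤ)| := by rw [abs_of_nonneg (by omega)]; omega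
  rw [G₁_eq_g₁, hn, if_pos hgap, mul_one]
  rcases abs_choice m with h | h <;> rw [h]
  rw [sub_neg_eq_add, ← sub_eq_add_neg, add_comm]

lemma sum_Icc_add_left {M : Type*} [AddCommMonoid M] (f : ℤ → M) (a b c : ℤ) :
    ∑ m ∈ Icc a b, f (c + m) = ∑ k ∈ Icc (c + a) (c + b), f k := by
  rw [← map_add_left_Icc, sum_map]; rfl

lemma sum_Icc_comp_neg {M : Type*} [AddCommMonoid M] (f : ℤ → M) (a : ℤ) :
    ∑ m ∈ Icc (-a) a, f (-m) = ∑ m ∈ Icc (-a) a, f m :=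
  sum_nbij' (- ·) (- ·) (by simp; omega) (by simp; omega) (by simp) (by simp) (by simp)

lemma sum_Icc_natCast {M : Type*} [AddCommMonoid M] (f : ℤ → M) (a b : ℕ) :
    ∑ k ∈ Icc (a : ℤ) b, f k = ∑ k ∈ Icc a b, f k :=
  sum_nbij' Int.toNat (↑) (by simp; omega) (by simp) (by simp; omega) (by simp)
    (fun k hk => by simp at hk; rw [Int.toNat_of_nonneg (by omega)])

lemma sum_G₁_natCast_add_two (c : ℝ) (N : ℕ) :
    ∑ m ∈ Icc (-N : ℤ) N, G₁ c (N + 2) m = 2 * ∑ k ∈ Icc 2 (2 * N + 2), g₁ c k := by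
  calc ∑ m ∈ Icc (-N : ℤ) N, G₁ c (N + 2) m
      = ∑ m ∈ Icc (-N : ℤ) N, (g₁ c (N + 2 + m) + g₁ c (N + 2 + -m)) :=
        sum_congr rfl fun m hm => by
          rw [G₁_natCast_add_two_of_abs_le c (abs_le.mpr (mem_Icc.mp hm)), sub_eq_add_neg]
    _ = 2 * ∑ m ∈ Icc (-N : ℤ) N, g₁ c (N + 2 + m) := by
        rw [sum_add_distrib, sum_Icc_comp_neg (fun m => g₁ c (N + 2 + m)), two_mul]
    _ = 2 * ∑ k ∈ Icc 2 (2 * N + 2), g₁ c k := by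
        rw [sum_Icc_add_left (g₁ c), ← sum_Icc_natCast]
        congr 3 <;> push_cast <;> ring

lemma tsum_G₁_mul_fN (c : ℝ) (N : ℕ) :
    ∑' m : ℤ, G₁ c ((N : ℤ) + 2) m * fN N m
      = 2 * ((Complex.I - 1) / 8) * ∑ k ∈ Icc 2 (2 * N + 2), (1 / (k : ℂ))
        + 2 * (c : ℂ) * ∑ k ∈ Icc 2 (2 * N + 2), ((-1 : ℂ) ^ k / (k : ℂ)) := by
  rw [tsum_mul_fN, sum_G₁_natCast_add_two, mul_sum, mul_sum, mul_sum, ← sum_add_distrib]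
  refine sum_congr rfl fun k _ => ?_
  simp only [g₁, zpow_natCast, Int.cast_natCast]
  ring

lemma div_four_le_norm (c x y : ℝ) :
    x / 4 ≤ ‖2 * ((Complex.I - 1) / 8) * (x : ℂ) + 2 * c * (y : ℂ)‖ := by
  calc x / 4 = (2 * ((Complex.I - 1) / 8) * (x : ℂ) + 2 * c * (y : ℂ)).im := by simp; ring
    _ ≤ _ := (le_abs_self _).trans (Complex.abs_im_le_norm _)

lemma tendsto_sum_Icc_two_inv_atTop :
    Tendsto (fun M : ℕ => ∑ k ∈ Icc 2 M, (k : ℝ)⁻¹) atTop atTop := by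
  have hharm : Tendsto (fun M : ℕ => (harmonic M : ℝ)) atTop atTop :=
    tendsto_atTop_mono log_add_one_le_harmonic
      (Real.tendsto_log_atTop.comp (tendsto_natCast_atTop_atTop.comp (tendsto_add_atTop_nat 1)))
  have hsplit : ∀ M ≥ 1, (harmonic M : ℝ) + -1 = ∑ k ∈ Icc 2 M, (k : ℝ)⁻¹ := by
    intro M hM
    rw [harmonic_eq_sum_Icc, Rat.cast_sum, Icc_eq_cons_Ioc hM, sum_cons, ← Icc_add_one_left_eq_Ioc]
    simp
  exact (tendsto_atTop_add_const_right _ (-1) hharm).congr' (eventually_atTop.mpr ⟨1, hsplit⟩)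

/-- Explicit evaluation `(G₁ f_N)(N+2) = 2a ∑_{k=2}^{2N+2} 1/k + 2c ∑_{k=2}^{2N+2} (-1)^k/k`
with `a = (i-1)/8`; in particular `|(G₁ f_N)(N+2)| → ∞` as `N → ∞`. -/
theorem stmt_15 (c : ℝ) :
    (∀ N : ℕ, ∑' m : ℤ, G₁ c ((N : ℤ) + 2) m * fN N m
        = 2 * ((Complex.I - 1) / 8) * ∑ k ∈ Finset.Icc 2 (2 * N + 2), (1 / (k : ℂ))
          + 2 * (c : ℂ) * ∑ k ∈ Finset.Icc 2 (2 * N + 2), ((-1 : ℂ) ^ k / (k : ℂ))) ∧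
    Filter.Tendsto (fun N : ℕ => ‖∑' m : ℤ, G₁ c ((N : ℤ) + 2) m * fN N m‖)
      Filter.atTop Filter.atTop := by
  refine ⟨tsum_G₁_mul_fN c, ?_⟩
  have hlower (N : ℕ) : (∑ k ∈ Icc 2 (2 * N + 2), (k : ℝ)⁻¹) / 4
      ≤ ‖∑' m : ℤ, G₁ c ((N : ℤ) + 2) m * fN N m‖ := by
    have hH : ∑ k ∈ Icc 2 (2 * N + 2), (1 / (k : ℂ))
        = ((∑ k ∈ Icc 2 (2 * N + 2), (k : ℝ)⁻¹ : ℝ) : ℂ) := by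
      push_cast; simp only [one_div]
    have hA : ∑ k ∈ Icc 2 (2 * N + 2), ((-1 : ℂ) ^ k / (k : ℂ))
        = ((∑ k ∈ Icc 2 (2 * N + 2), (-1 : ℝ) ^ k / k : ℝ) : ℂ) := by
      push_cast; rfl
    rw [tsum_G₁_mul_fN, hH, hA]
    exact div_four_le_norm c _ _
  have hgrow : Tendsto (fun N : ℕ => 2 * N + 2) atTop atTop :=
    tendsto_atTop_mono (fun N => by simp only [id]; omega) tendsto_id
  exact tendsto_atTop_mono hlower
    ((tendsto_sum_Icc_two_inv_atTop.comp hgrow).atTop_div_const (by norm_num))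
end

section
/- For a∈ℝ and θ₀∈(-π,0) determined by the phase Φ_{a,s}(θ)=√((2-2cos θ)²+a²) - sθ on [-π,0]: the cubic h_a(x)=4x³-8x²+(2a²+4)x+a² satisfies h_a(x)>0 for x∈[0,1], h_a(-1)=-a²-16<0, and h_a'(x)>0 for x<0; hence h_a has a unique root x₀ in [-1,1], and x₀∈(-1,0). -/
/-!
On `[0, 1]` the cubic is `4x(x-1)² + a²(2x+1)`, a sum of a nonnegative term and a positive one,
while its value at `-1` is `-a² - 16 < 0`; hence every root in `[-1, 1]` lies in `(-1, 0)`.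
On `(-∞, 0]` its derivative `12x² - 16x + 2a² + 4` is positive, so the cubic is strictly
increasing there: the intermediate value theorem gives a root in `[-1, 0]` and monotonicity
makes it unique.
-/

open Set

def phaseCubic (a x : ℝ) : ℝ := 4 * x ^ 3 - 8 * x ^ 2 + (2 * a ^ 2 + 4) * x + a ^ 2

namespace phaseCubic

variable (a : ℝ)

lemma eq_mul_sub_one_sq_add (x : ℝ) :
    phaseCubic a x = 4 * x * (x - 1) ^ 2 + a ^ 2 * (2 * x + 1) := by
  unfold phaseCubic; ring

lemma neg_one : phaseCubic a (-1) = -a ^ 2 - 16 := by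
  unfold phaseCubic; ring

lemma neg_one_neg : phaseCubic a (-1) < 0 := by
  rw [neg_one]; nlinarith [sq_nonneg a]

lemma pos_of_mem_Icc {a : ℝ} (ha : a ≠ 0) {x : ℝ} (hx : x ∈ Icc (0 : ℝ) 1) :
    0 < phaseCubic a x := by
  rw [eq_mul_sub_one_sq_add]
  have h₁ : 0 ≤ 4 * x * (x - 1) ^ 2 := by have := hx.1; positivity
  have h₂ : 0 < a ^ 2 * (2 * x + 1) := mul_pos (by positivity) (by linarith [hx.1])
  linarith

lemma hasDerivAt (x : ℝ) :
    HasDerivAt (phaseCubic a) (12 * x ^ 2 - 16 * x + (2 * a ^ 2 + 4)) x := by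
  have h := ((((hasDerivAt_pow 3 x).const_mul 4).sub ((hasDerivAt_pow 2 x).const_mul 8)).add
    ((hasDerivAt_id' x).const_mul (2 * a ^ 2 + 4))).add_const (a ^ 2)
  exact h.congr_deriv (by norm_num; ring)

lemma deriv_pos_of_nonpos {x : ℝ} (hx : x ≤ 0) : 0 < deriv (phaseCubic a) x := by
  rw [(hasDerivAt a x).deriv]
  nlinarith [sq_nonneg x, sq_nonneg a]

lemma strictMonoOn_Iic_zero : StrictMonoOn (phaseCubic a) (Iic 0) := by
  refine strictMonoOn_of_deriv_pos (convex_Iic 0)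
    (fun x _ ↦ (hasDerivAt a x).continuousAt.continuousWithinAt) fun x hx ↦ ?_
  rw [interior_Iic] at hx
  exact deriv_pos_of_nonpos a (le_of_lt hx)

lemma mem_Ioo_of_isRoot {a : ℝ} (ha : a ≠ 0) {x : ℝ} (hx : x ∈ Icc (-1 : ℝ) 1)
    (hroot : phaseCubic a x = 0) : x ∈ Ioo (-1 : ℝ) 0 := by
  refine ⟨lt_of_le_of_ne hx.1 ?_, lt_of_not_ge fun h ↦ ?_⟩
  · rintro rfl; linarith [neg_one_neg a]
  · linarith [pos_of_mem_Icc ha ⟨h, hx.2⟩]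

lemma existsUnique_isRoot {a : ℝ} (ha : a ≠ 0) :
    ∃! x, x ∈ Icc (-1 : ℝ) 1 ∧ phaseCubic a x = 0 := by
  have hcont : ContinuousOn (phaseCubic a) (Icc (-1) 0) := by unfold phaseCubic; fun_prop
  obtain ⟨x₀, hx₀, hroot⟩ := intermediate_value_Icc (by norm_num) hcont
    ⟨(neg_one_neg a).le, (pos_of_mem_Icc ha ⟨le_rfl, zero_le_one⟩).le⟩
  refine ⟨x₀, ⟨⟨hx₀.1, hx₀.2.trans zero_le_one⟩, hroot⟩, fun y ⟨hy, hyroot⟩ ↦ ?_⟩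
  exact (strictMonoOn_Iic_zero a).injOn (mem_Ioo_of_isRoot ha hy hyroot).2.le hx₀.2
    (hyroot.trans hroot.symm)

end phaseCubic

/-- The cubic `h_a(x) = 4x³ - 8x² + (2a²+4)x + a²` controlling the critical points of the
second derivative of the phase `Φ_{a,s}`: it is positive on `[0,1]`, negative at `-1`
(with value `-a² - 16`), strictly increasing on `(-∞, 0)`, and hence has a unique root `x₀`
in `[-1,1]`, which moreover lies in `(-1, 0)`. -/
theorem stmt_16 (a : ℝ) (ha : a ≠ 0) :
    (∀ x ∈ Set.Icc (0 : ℝ) 1, 0 < 4 * x ^ 3 - 8 * x ^ 2 + (2 * a ^ 2 + 4) * x + a ^ 2) ∧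
    (4 * (-1 : ℝ) ^ 3 - 8 * (-1 : ℝ) ^ 2 + (2 * a ^ 2 + 4) * (-1) + a ^ 2 = -a ^ 2 - 16) ∧
    (-a ^ 2 - 16 < 0) ∧
    (∀ x : ℝ, x < 0 →
      0 < deriv (fun x : ℝ => 4 * x ^ 3 - 8 * x ^ 2 + (2 * a ^ 2 + 4) * x + a ^ 2) x) ∧
    (∃! x₀ : ℝ, x₀ ∈ Set.Icc (-1 : ℝ) 1 ∧
      4 * x₀ ^ 3 - 8 * x₀ ^ 2 + (2 * a ^ 2 + 4) * x₀ + a ^ 2 = 0) ∧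
    (∀ x₀ ∈ Set.Icc (-1 : ℝ) 1,
      4 * x₀ ^ 3 - 8 * x₀ ^ 2 + (2 * a ^ 2 + 4) * x₀ + a ^ 2 = 0 →
        x₀ ∈ Set.Ioo (-1 : ℝ) 0) :=
  ⟨fun _ hx ↦ phaseCubic.pos_of_mem_Icc ha hx,
    phaseCubic.neg_one a,
    phaseCubic.neg_one a ▸ phaseCubic.neg_one_neg a,
    fun _ hx ↦ phaseCubic.deriv_pos_of_nonpos a hx.le,
    phaseCubic.existsUnique_isRoot ha,
    fun _ hx hroot ↦ phaseCubic.mem_Ioo_of_isRoot ha hx hroot⟩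
end
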